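/- arXiv:1802.08210 — 3 statements merged into one kernel-verified Lean document; each statement's English description precedes it below -/
import Mathlib

section
/- Symmetrization identity over the symmetric group: for pairwise distinct elements u_1, ..., u_k of a field and a parameter q with all denominators nonzero, Σ_{σ ∈ S_k} ∏_{1 ≤ i < j ≤ k} (u_{σ(i)} − q u_{σ(j)})/(u_{σ(i)} − u_{σ(j)}) = ∏_{i=1}^k (1 + q + q^2 + ⋯ + q^{i−1}), i.e. the q-factorial [k]_q! = ∏_{i=1}^k (1−q^i)/(1−q). -/
/-!
Fixing `σ 0 = p` and inducting on `k` reduces the identity to `∑ₚ wₚ = [n]_q` for `n` distinct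
nodes, where `wₚ = ∏_{l ≠ p} (u_p - q u_l) / (u_p - u_l)`.
If no node is zero, `F = ∏ (X - q u_l) - q^n ∏ (X - u_l)` vanishes at `0`, and `F / X` has
degree `< n` and takes the value `(1 - q) ∏_{l ≠ p} (u_p - q u_l)` at `u_p`; so Lagrange
interpolation reads off its `X^{n-1}`-coefficient `1 - q^n` as `(1 - q) ∑ₚ wₚ`.
A zero node contributes `q^{n-1}` and cancels from the other weights.
-/

open Finset Polynomial Lagrange

lemma Lagrange.coeff_nodal_card {R ι : Type*} [CommRing R] [Nontrivial R] (s : Finset ι)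
    (v : ι → R) : (nodal s v).coeff #s = 1 := by
  simpa [natDegree_nodal] using (nodal_monic (s := s) (v := v)).coeff_natDegree

section Weights

variable {K ι : Type*} [Field K] [DecidableEq ι] {s : Finset ι} {v : ι → K}

lemma one_sub_mul_sum_prod_div_of_ne_zero (hv : Set.InjOn v s) (hv0 : ∀ i ∈ s, v i ≠ 0)
    (q : K) :
    (1 - q) * ∑ p ∈ s, ∏ l ∈ s.erase p, (v p - q * v l) / (v p - v l) = 1 - q ^ #s := by
  rcases s.eq_empty_or_nonempty with rfl | hs
  · simp
  set P : K[X] := nodal s (fun i => q * v i) - C (q ^ #s) * nodal s v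
  have hP0 : P.coeff 0 = 0 := by
    simp only [P, coeff_zero_eq_eval_zero, eval_sub, eval_mul, eval_C, eval_nodal, zero_sub,
      neg_mul_eq_mul_neg q, prod_mul_distrib, prod_const, sub_self]
  have hcard : #s - 1 + 1 = #s := Nat.sub_add_cancel hs.card_pos
  have hdeg : P.divX.degree < #s := by
    have hP : P.natDegree ≤ #s :=
      (natDegree_sub_le _ _).trans <| max_le natDegree_nodal.le
        ((natDegree_C_mul_le _ _).trans natDegree_nodal.le)
    refine degree_le_natDegree.trans_lt ?_
    rw [natDegree_divX_eq_natDegree_tsub_one]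
    exact_mod_cast (by omega : P.natDegree - 1 < #s)
  have heval : ∀ p ∈ s, P.divX.eval (v p) = (1 - q) * ∏ l ∈ s.erase p, (v p - q * v l) := by
    intro p hp
    have h := congrArg (eval (v p)) (divX_mul_X_add P)
    simp only [hP0, eval_add, eval_mul, eval_X, eval_C, add_zero, P, eval_sub, eval_nodal,
      eval_nodal_at_node hp, mul_zero, sub_zero, ← mul_prod_erase s _ hp] at h
    exact mul_right_cancel₀ (hv0 p hp) (by linear_combination h)
  have hsum := coeff_eq_sum hv hdeg
  rw [coeff_divX, hcard, coeff_sub, coeff_C_mul, coeff_nodal_card, coeff_nodal_card, mul_one]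
    at hsum
  rw [hsum, mul_sum]
  refine sum_congr rfl fun p hp => ?_
  rw [heval p hp, mul_div_assoc, prod_div_distrib]

lemma sum_prod_div_eq_add_pow_of_eq_zero (hv : Set.InjOn v s) {p₀ : ι} (hp₀ : p₀ ∈ s)
    (hvp₀ : v p₀ = 0) (q : K) :
    ∑ p ∈ s, ∏ l ∈ s.erase p, (v p - q * v l) / (v p - v l)
      = ∑ p ∈ s.erase p₀, ∏ l ∈ (s.erase p₀).erase p, (v p - q * v l) / (v p - v l)
        + q ^ (#s - 1) := by
  have hv0 : ∀ l ∈ s.erase p₀, v l ≠ 0 := fun l hl h =>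
    (mem_erase.1 hl).1 (hv (mem_erase.1 hl).2 hp₀ (h.trans hvp₀.symm))
  rw [← add_sum_erase s _ hp₀, add_comm, ← card_erase_of_mem hp₀, ← prod_const]
  congr 1
  · refine sum_congr rfl fun p hp => ?_
    rw [← mul_prod_erase _ _ (mem_erase.2 ⟨(mem_erase.1 hp).1.symm, hp₀⟩), erase_right_comm,
      hvp₀, mul_zero, sub_zero, div_self (hv0 p hp), one_mul]
  · refine prod_congr rfl fun l hl => ?_
    rw [hvp₀, zero_sub, zero_sub, neg_div_neg_eq, mul_div_assoc, div_self (hv0 l hl), mul_one]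

lemma one_sub_mul_sum_prod_div (hv : Set.InjOn v s) (q : K) :
    (1 - q) * ∑ p ∈ s, ∏ l ∈ s.erase p, (v p - q * v l) / (v p - v l) = 1 - q ^ #s := by
  by_cases h0 : ∃ p₀ ∈ s, v p₀ = 0
  · obtain ⟨p₀, hp₀, hvp₀⟩ := h0
    have hcard : #s = #(s.erase p₀) + 1 := (card_erase_add_one hp₀).symm
    rw [sum_prod_div_eq_add_pow_of_eq_zero hv hp₀ hvp₀, mul_add,
      one_sub_mul_sum_prod_div_of_ne_zero (hv.mono (erase_subset _ _)) ?_, hcard,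
      Nat.add_sub_cancel]
    · ring
    · exact fun l hl h => (mem_erase.1 hl).1 (hv (mem_erase.1 hl).2 hp₀ (h.trans hvp₀.symm))
  · exact one_sub_mul_sum_prod_div_of_ne_zero hv (fun p hp h => h0 ⟨p, hp, h⟩) q

theorem sum_prod_div_eq_geom_sum (hv : Set.InjOn v s) (q : K) :
    ∑ p ∈ s, ∏ l ∈ s.erase p, (v p - q * v l) / (v p - v l) = ∑ j ∈ range #s, q ^ j := by
  rcases eq_or_ne q 1 with rfl | hq
  · refine (sum_congr rfl fun p hp => prod_eq_one fun l hl => ?_).trans (by simp)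
    have hpl : v p - v l ≠ 0 :=
      sub_ne_zero.2 fun h => (mem_erase.1 hl).1 (hv hp (mem_erase.1 hl).2 h).symm
    rw [one_mul, div_self hpl]
  · exact mul_left_cancel₀ (sub_ne_zero.2 hq.symm)
      ((one_sub_mul_sum_prod_div hv q).trans (mul_neg_geom_sum q #s).symm)

end Weights

section OrderedPairs

variable {M α : Type*}

def orderedPairProd [CommMonoid M] (g : α → α → M) {n : ℕ} (w : Fin n → α) : M :=
  ∏ i, ∏ j ∈ Ioi i, g (w i) (w j)

lemma orderedPairProd_succ [CommMonoid M] (g : α → α → M) {n : ℕ} (w : Fin (n + 1) → α) :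
    orderedPairProd g w
      = (∏ j : Fin n, g (w 0) (w j.succ)) * orderedPairProd g (fun j => w j.succ) := by
  rw [orderedPairProd, Fin.prod_univ_succ, Fin.prod_Ioi_zero]
  exact congrArg _ (prod_congr rfl fun i _ => Fin.prod_Ioi_succ _ i)

lemma Equiv.Perm.prod_comp_succ_eq_prod_erase [CommMonoid M] {n : ℕ}
    (σ : Equiv.Perm (Fin (n + 1))) (f : Fin (n + 1) → M) :
    ∏ j : Fin n, f (σ j.succ) = ∏ l ∈ univ.erase (σ 0), f l := by
  rw [← Fin.prod_Ioi_zero (f := fun x => f (σ x))]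
  exact prod_equiv σ (by simp) fun _ _ => rfl

lemma sum_perm_orderedPairProd_succ [CommSemiring M] (g : α → α → M) {n : ℕ}
    (w : Fin (n + 1) → α) :
    ∑ σ : Equiv.Perm (Fin (n + 1)), orderedPairProd g (w ∘ σ)
      = ∑ p, (∏ l ∈ univ.erase p, g (w p) (w l)) *
          ∑ e : Equiv.Perm (Fin n),
            orderedPairProd g ((fun j => w (Equiv.swap 0 p j.succ)) ∘ e) := by
  rw [← Equiv.Perm.decomposeFin.symm.sum_comp, Fintype.sum_prod_type]
  refine sum_congr rfl fun p _ => ?_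
  rw [mul_sum]
  refine sum_congr rfl fun e _ => ?_
  set σ := Equiv.Perm.decomposeFin.symm (p, e)
  have hσ0 : σ 0 = p := Equiv.Perm.decomposeFin_symm_apply_zero p e
  rw [orderedPairProd_succ]
  simp only [Function.comp_apply]
  rw [Equiv.Perm.prod_comp_succ_eq_prod_erase σ (fun l => g (w (σ 0)) (w l)), hσ0]
  simp only [σ, Equiv.Perm.decomposeFin_symm_apply_succ]
  rfl

end OrderedPairs

/-- Symmetrization identity over the symmetric group: for pairwise distinct `u_1, ..., u_k`
and a parameter `q`,
`Σ_{σ ∈ S_k} ∏_{i<j} (u_{σ(i)} − q u_{σ(j)})/(u_{σ(i)} − u_{σ(j)})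
  = ∏_{i=1}^k (1 + q + ⋯ + q^{i−1})`, the `q`-factorial `[k]_q!`. -/
theorem symmetrization_identity {k : ℕ} (u : Fin k → ℂ) (q : ℂ)
    (hu : Function.Injective u) :
    ∑ σ : Equiv.Perm (Fin k),
        ∏ i : Fin k, ∏ j ∈ Finset.Ioi i,
          (u (σ i) - q * u (σ j)) / (u (σ i) - u (σ j)) =
      ∏ i ∈ Finset.range k, ∑ j ∈ Finset.range (i+1), q^j := by
  change ∑ σ : Equiv.Perm (Fin k),
    orderedPairProd (fun a b => (a - q * b) / (a - b)) (u ∘ σ) = _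
  induction k with
  | zero => simp [orderedPairProd]
  | succ k ih =>
    have hrow := sum_prod_div_eq_geom_sum (s := univ) hu.injOn q
    rw [card_univ, Fintype.card_fin] at hrow
    rw [sum_perm_orderedPairProd_succ, prod_range_succ, ← hrow, mul_sum]
    refine sum_congr rfl fun p _ => ?_
    rw [ih (fun j => u (Equiv.swap 0 p j.succ))
      (hu.comp ((Equiv.swap 0 p).injective.comp (Fin.succ_injective _))), mul_comm]
end

section
/- String specialization identity (q-Whittaker case): let λ = (λ_1 ≥ ⋯ ≥ λ_m > 0) be a partition of k with m parts, let 0 < q < 1 and let w_1, ..., w_m be complex numbers such that all denominators below are nonzero. Define the k-vector (z_1,...,z_k) = (w_1, q w_1, ..., q^{λ_1−1} w_1, w_2, ..., q^{λ_2−1} w_2, ..., q^{λ_m−1} w_m). Then ∏_{1 ≤ a < b ≤ k} (1 − q z_a z_b)/(1 − z_a z_b) · ∏_{i=1}^k 1/(1 − z_i^2) = ∏_{1 ≤ a < b ≤ m} [(q^{λ_a} w_a w_b; q)_∞ (q^{λ_b} w_a w_b; q)_∞]/[(w_a w_b; q)_∞ (q^{λ_a+λ_b} w_a w_b; q)_∞]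 · ∏_{j=1}^m (q^{λ_j} w_j^2; q)_∞/(w_j^2; q)_∞. -/
/-!
Only unordered pairs of variables matter, so the order on `Fin k` may be replaced by the
lexicographic order on the strings `Σ a, Fin (λ a)`; the pair product then splits into pairs taken
from two different strings and pairs inside one string. For two strings, with `x = w_a w_b`, the
factors `(1 - x q^(s+t+1)) / (1 - x q^(s+t))` telescope in `t` to `(q^λ_b x; q)_λ_a / (x; q)_λ_a`.
Inside one string, the factors with larger index `t`, together with `1 / (1 - z_t²)`, telescope to
`1 / (1 - w_a² q^t)`, which gives `1 / (w_a²; q)_λ_a`. Both are ratios of infinite products since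
`(x; q)_∞ = (x; q)_n (q^n x; q)_∞`.
-/

noncomputable def qPochInf (a q : ℂ) : ℂ := ∏' i : ℕ, (1 - a * q^i)

open Finset

section PairProducts

variable {M : Type*} [CommMonoid M]

theorem prod_filter_lt_comp_equiv {α β : Type*} [LinearOrder α] [Fintype α] [LinearOrder β]
    [Fintype β] (e : α ≃ β) (G : β → β → M) (hG : ∀ x y, G x y = G y x) :
    ∏ i, ∏ j with i < j, G (e i) (e j) = ∏ x, ∏ y with x < y, G x y := by
  have hcomp : ∏ x, ∏ y with x < y, G x y = ∏ i, ∏ j with e i < e j, G (e i) (e j) := by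
    simp only [prod_filter]
    rw [← e.prod_comp]
    exact Fintype.prod_congr _ _ fun i => (e.prod_comp _).symm
  have hpairs : ∀ (r : α → α → Prop) [DecidableRel r],
      ∏ i, ∏ j with r i j, G (e i) (e j) = ∏ p : α × α with r p.1 p.2, G (e p.1) (e p.2) := by
    intro r _
    simp only [prod_filter]
    exact (Fintype.prod_prod_type' fun i j => if r i j then G (e i) (e j) else 1).symm
  -- swapping coordinates matches the pairs ordered only by `<` with those ordered only via `e`
  have hswap : ∏ p : α × α with p.1 < p.2 ∧ ¬ e p.1 < e p.2, G (e p.1) (e p.2) =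
      ∏ p : α × α with e p.1 < e p.2 ∧ ¬ p.1 < p.2, G (e p.1) (e p.2) := by
    refine prod_equiv (Equiv.prodComm α α) (fun p => ?_) (fun p _ => hG _ _)
    have hinj := e.injective.eq_iff (a := p.1) (b := p.2)
    simp only [mem_filter, mem_univ, true_and, Equiv.prodComm_apply, Prod.fst_swap,
      Prod.snd_swap, not_lt]
    constructor
    · rintro ⟨h₁, h₂⟩; exact ⟨lt_of_le_of_ne h₂ fun h => h₁.ne (hinj.1 h.symm), h₁.le⟩
    · rintro ⟨h₁, h₂⟩; exact ⟨lt_of_le_of_ne h₂ fun h => h₁.ne' (congrArg e h), h₁.le⟩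
  calc ∏ i, ∏ j with i < j, G (e i) (e j)
      = (∏ p : α × α with p.1 < p.2 ∧ e p.1 < e p.2, G (e p.1) (e p.2)) *
          ∏ p : α × α with p.1 < p.2 ∧ ¬ e p.1 < e p.2, G (e p.1) (e p.2) := by
        rw [hpairs, ← filter_filter, ← filter_filter, prod_filter_mul_prod_filter_not]
    _ = (∏ p : α × α with e p.1 < e p.2 ∧ p.1 < p.2, G (e p.1) (e p.2)) *
          ∏ p : α × α with e p.1 < e p.2 ∧ ¬ p.1 < p.2, G (e p.1) (e p.2) := by
        rw [hswap]
        simp only [and_comm]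
    _ = ∏ x, ∏ y with x < y, G x y := by
        rw [← filter_filter, ← filter_filter, prod_filter_mul_prod_filter_not, hcomp, hpairs]

theorem Sigma.toLex_mk_lt_mk_iff {ι : Type*} {κ : ι → Type*} [LinearOrder ι]
    [∀ i, LinearOrder (κ i)] {i : ι} {s t : κ i} :
    toLex (⟨i, s⟩ : Σ i, κ i) < toLex ⟨i, t⟩ ↔ s < t :=
  (Sigma.lex_iff (a := ⟨i, s⟩) (b := ⟨i, t⟩)).trans (by simp)

theorem Sigma.toLex_mk_lt_mk_iff_of_ne {ι : Type*} {κ : ι → Type*} [LinearOrder ι]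
    [∀ i, LinearOrder (κ i)] {i j : ι} (h : i ≠ j) {s : κ i} {t : κ j} :
    toLex (⟨i, s⟩ : Σ i, κ i) < toLex ⟨j, t⟩ ↔ i < j :=
  (Sigma.lex_iff (a := ⟨i, s⟩) (b := ⟨j, t⟩)).trans (by simp [h])

variable {ι : Type*} {κ : ι → Type*} [LinearOrder ι] [Fintype ι] [∀ i, LinearOrder (κ i)]
  [∀ i, Fintype (κ i)]

theorem prod_filter_toLex_lt (F : (Σ i, κ i) → M) (i : ι) (s : κ i) :
    ∏ y : Σₗ i, κ i with toLex ⟨i, s⟩ < y, F (ofLex y) =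
      (∏ j with i < j, ∏ t, F ⟨j, t⟩) * ∏ t with s < t, F ⟨i, t⟩ := by
  rw [prod_filter, ← toLex.prod_comp, Fintype.prod_sigma, Fintype.prod_eq_mul_prod_compl i,
    mul_comm]
  congr 1
  · rw [prod_filter, ← prod_subset (subset_univ ({i}ᶜ : Finset ι))]
    · refine prod_congr rfl fun j hj => ?_
      have hij : i ≠ j := fun h => (mem_compl.1 hj) (mem_singleton.2 h.symm)
      simp only [Sigma.toLex_mk_lt_mk_iff_of_ne hij, prod_ite_irrel, prod_const_one]
      rfl
    · intro j _ hj
      simp only [mem_compl, mem_singleton, not_not] at hj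
      simp [hj]
  · simp only [prod_filter, Sigma.toLex_mk_lt_mk_iff]
    rfl

theorem prod_filter_lt_sigmaLex (G : (Σ i, κ i) → (Σ i, κ i) → M) :
    ∏ x : Σₗ i, κ i, ∏ y with x < y, G (ofLex x) (ofLex y) =
      ∏ i, ((∏ j with i < j, ∏ s, ∏ t, G ⟨i, s⟩ ⟨j, t⟩) *
        ∏ s, ∏ t with s < t, G ⟨i, s⟩ ⟨i, t⟩) := by
  rw [← toLex.prod_comp, Fintype.prod_sigma]
  refine Fintype.prod_congr _ _ fun i => ?_
  simp only [prod_filter_toLex_lt, prod_mul_distrib]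
  rw [prod_comm]
  rfl

theorem prod_filter_lt_mul_prod_comp_equiv_sigma {α : Type*} [LinearOrder α] [Fintype α]
    (e : α ≃ Σ i, κ i) (G : (Σ i, κ i) → (Σ i, κ i) → M) (hG : ∀ x y, G x y = G y x)
    (D : (Σ i, κ i) → M) :
    (∏ i, ∏ j with i < j, G (e i) (e j)) * ∏ i, D (e i) =
      ∏ i, ((∏ j with i < j, ∏ s, ∏ t, G ⟨i, s⟩ ⟨j, t⟩) *
        ((∏ s, ∏ t with s < t, G ⟨i, s⟩ ⟨i, t⟩) * ∏ s, D ⟨i, s⟩)) := by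
  -- transport the order of `α` to the lexicographic one, in which every fibre is an interval
  have h := prod_filter_lt_comp_equiv (e.trans toLex) (fun x y => G (ofLex x) (ofLex y))
    fun x y => hG _ _
  rw [prod_filter_lt_sigmaLex] at h
  simp only [Equiv.trans_apply, ofLex_toLex] at h
  rw [h, e.prod_comp D, Fintype.prod_sigma, ← prod_mul_distrib]
  simp only [mul_assoc]

end PairProducts

theorem Fin.prod_filter_lt_eq_prod_range {M : Type*} [CommMonoid M] (f : ℕ → ℕ → M) (n : ℕ) :
    ∏ s : Fin n, ∏ t with s < t, f s t = ∏ t ∈ range n, ∏ s ∈ range t, f s t := by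
  rw [prod_comm' (t' := univ) (s' := fun t => Iio t) (by simp)]
  rw [← Fin.prod_univ_eq_prod_range]
  refine Fintype.prod_congr _ _ fun t => ?_
  rw [← Nat.Iio_eq_range, ← Fin.map_valEmbedding_Iio, prod_map]
  rfl

-- the finite q-Pochhammer symbol `(a; q)_n`
def qPoch {R : Type*} [CommRing R] (a q : R) (n : ℕ) : R := ∏ i ∈ range n, (1 - a * q ^ i)

section Telescoping

variable {K : Type*} [Field K]

theorem prod_range_div_of_ne_zero (f : ℕ → K) (hf : ∀ i, f i ≠ 0) (n : ℕ) :
    ∏ i ∈ range n, f (i + 1) / f i = f n / f 0 := by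
  simpa using congrArg Units.val (prod_range_div (fun i => Units.mk0 (f i) (hf i)) n)

variable {a q : K}

theorem prod_range_one_sub_mul_pow_div (ha : ∀ i, 1 - a * q ^ i ≠ 0) (c n : ℕ) :
    ∏ t ∈ range n, (1 - a * q ^ (c + t + 1)) / (1 - a * q ^ (c + t)) =
      (1 - a * q ^ (c + n)) / (1 - a * q ^ c) :=
  prod_range_div_of_ne_zero (fun t => 1 - a * q ^ (c + t)) (fun _ => ha _) n

theorem prod_range_prod_range_one_sub_mul_pow_div (ha : ∀ i, 1 - a * q ^ i ≠ 0) (m n : ℕ) :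
    ∏ s ∈ range m, ∏ t ∈ range n, (1 - a * q ^ (s + t + 1)) / (1 - a * q ^ (s + t)) =
      qPoch (q ^ n * a) q m / qPoch a q m := by
  simp only [prod_range_one_sub_mul_pow_div ha, prod_div_distrib, qPoch]
  congr 1
  exact prod_congr rfl fun s _ => by ring

theorem prod_range_prod_range_lt_one_sub_mul_pow_div (ha : ∀ i, 1 - a * q ^ i ≠ 0) (n : ℕ) :
    ∏ t ∈ range n, ((∏ s ∈ range t, (1 - a * q ^ (t + s + 1)) / (1 - a * q ^ (t + s))) *
      (1 - a * q ^ (t + t))⁻¹) = (qPoch a q n)⁻¹ := by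
  rw [qPoch, ← prod_inv_distrib]
  refine prod_congr rfl fun t _ => ?_
  have := ha (t + t)
  rw [prod_range_one_sub_mul_pow_div ha]
  field_simp

end Telescoping

section qPochInf

variable {q : ℂ}

theorem multipliable_qPochInf (hq : ‖q‖ < 1) (a : ℂ) :
    Multipliable fun i : ℕ => 1 - a * q ^ i := by
  have hs : Summable fun i : ℕ => ‖-(a * q ^ i)‖ := by
    simpa only [norm_neg, norm_mul, norm_pow] using
      (summable_geometric_of_lt_one (norm_nonneg q) hq).mul_left ‖a‖
  simpa only [sub_eq_add_neg] using multipliable_one_add_of_summable hs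

theorem qPochInf_eq_qPoch_mul (hq : ‖q‖ < 1) (a : ℂ) (n : ℕ) :
    qPochInf a q = qPoch a q n * qPochInf (q ^ n * a) q := by
  have hshift : Multipliable fun i => 1 - a * q ^ (i + n) :=
    (multipliable_qPochInf hq (q ^ n * a)).congr fun i => by ring
  rw [qPochInf, ← Multipliable.prod_mul_tprod_nat_mul' (f := fun i => 1 - a * q ^ i) hshift,
    qPoch, qPochInf]
  exact congrArg _ (tprod_congr fun i => by ring)

theorem one_sub_mul_pow_ne_zero_of_qPochInf {a : ℂ} (h : qPochInf a q ≠ 0) (i : ℕ) :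
    1 - a * q ^ i ≠ 0 :=
  fun h0 => h (tprod_of_exists_eq_zero ⟨i, h0⟩)

theorem qPoch_ne_zero {a : ℂ} (h : qPochInf a q ≠ 0) (n : ℕ) : qPoch a q n ≠ 0 :=
  prod_ne_zero_iff.2 fun i _ => one_sub_mul_pow_ne_zero_of_qPochInf h i

theorem qPochInf_pow_mul_ne_zero {a : ℂ} (hq : ‖q‖ < 1) (h : qPochInf a q ≠ 0) (n : ℕ) :
    qPochInf (q ^ n * a) q ≠ 0 :=
  right_ne_zero_of_mul (qPochInf_eq_qPoch_mul hq a n ▸ h)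

theorem qPochInf_pow_mul_div {a : ℂ} (hq : ‖q‖ < 1) (h : qPochInf a q ≠ 0) (n : ℕ) :
    qPochInf (q ^ n * a) q / qPochInf a q = (qPoch a q n)⁻¹ := by
  have := qPochInf_pow_mul_ne_zero hq h n
  rw [qPochInf_eq_qPoch_mul hq a n]
  field_simp

theorem qPochInf_cross_ratio {a : ℂ} (hq : ‖q‖ < 1) (h : qPochInf a q ≠ 0) (m n : ℕ) :
    qPochInf (q ^ m * a) q * qPochInf (q ^ n * a) q /
        (qPochInf a q * qPochInf (q ^ (m + n) * a) q) =
      qPoch (q ^ n * a) q m / qPoch a q m := by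
  have h₁ := qPochInf_pow_mul_ne_zero hq h m
  have h₂ := qPochInf_pow_mul_ne_zero hq h (m + n)
  have h₃ := qPoch_ne_zero h m
  rw [qPochInf_eq_qPoch_mul hq a m, qPochInf_eq_qPoch_mul hq (q ^ n * a) m,
    ← mul_assoc (q ^ m), ← pow_add,
    div_eq_div_iff (mul_ne_zero (mul_ne_zero h₃ h₁) h₂) h₃]
  ring

theorem prod_cross_string (hq : ‖q‖ < 1) (u v : ℂ) (h : qPochInf (u * v) q ≠ 0) (m n : ℕ) :
    ∏ s : Fin m, ∏ t : Fin n,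
        (1 - q * (q ^ (s : ℕ) * u) * (q ^ (t : ℕ) * v)) /
          (1 - q ^ (s : ℕ) * u * (q ^ (t : ℕ) * v)) =
      qPochInf (q ^ m * (u * v)) q * qPochInf (q ^ n * (u * v)) q /
        (qPochInf (u * v) q * qPochInf (q ^ (m + n) * (u * v)) q) := by
  rw [qPochInf_cross_ratio hq h,
    ← prod_range_prod_range_one_sub_mul_pow_div (one_sub_mul_pow_ne_zero_of_qPochInf h)]
  simp only [prod_range]
  refine Fintype.prod_congr _ _ fun s => Fintype.prod_congr _ _ fun t => ?_
  congr 1 <;> ring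

theorem prod_self_string (hq : ‖q‖ < 1) (u : ℂ) (h : qPochInf (u ^ 2) q ≠ 0) (n : ℕ) :
    (∏ s : Fin n, ∏ t with s < t,
        (1 - q * (q ^ (s : ℕ) * u) * (q ^ (t : ℕ) * u)) /
          (1 - q ^ (s : ℕ) * u * (q ^ (t : ℕ) * u))) *
      ∏ s : Fin n, (1 - (q ^ (s : ℕ) * u) ^ 2)⁻¹ =
      qPochInf (q ^ n * u ^ 2) q / qPochInf (u ^ 2) q := by
  rw [qPochInf_pow_mul_div hq h,
    ← prod_range_prod_range_lt_one_sub_mul_pow_div (one_sub_mul_pow_ne_zero_of_qPochInf h),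
    prod_mul_distrib,
    Fin.prod_filter_lt_eq_prod_range (fun s t =>
      (1 - q * (q ^ s * u) * (q ^ t * u)) / (1 - q ^ s * u * (q ^ t * u))),
    ← Fin.prod_univ_eq_prod_range (fun t => (1 - u ^ 2 * q ^ (t + t))⁻¹)]
  congr 1
  · refine prod_congr rfl fun t _ => prod_congr rfl fun s _ => ?_
    congr 1 <;> ring
  · exact Fintype.prod_congr _ _ fun s => by ring

end qPochInf

theorem string_specialization_qWhittaker_general
    {m k : ℕ} (lam : Fin m → ℕ) (q : ℝ) (hq0 : 0 < q) (hq1 : q < 1)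
    (w : Fin m → ℂ)
    (z : Fin k → ℂ) (e : Fin k ≃ (Σ a : Fin m, Fin (lam a)))
    (hz : ∀ i, z i = (q:ℂ)^(((e i).2 : ℕ)) * w (e i).1)
    (hden3 : ∀ a b : Fin m, a ≠ b → qPochInf (w a * w b) (q:ℂ) ≠ 0)
    (hden5 : ∀ j, qPochInf ((w j)^2) (q:ℂ) ≠ 0) :
    (∏ i : Fin k, ∏ j ∈ Finset.Ioi i, (1 - (q:ℂ) * z i * z j) / (1 - z i * z j)) *
        ∏ i : Fin k, (1 - (z i)^2)⁻¹ =
      (∏ a : Fin m, ∏ b ∈ Finset.Ioi a,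
          (qPochInf ((q:ℂ)^(lam a) * (w a * w b)) (q:ℂ) *
              qPochInf ((q:ℂ)^(lam b) * (w a * w b)) (q:ℂ)) /
            (qPochInf (w a * w b) (q:ℂ) *
              qPochInf ((q:ℂ)^(lam a + lam b) * (w a * w b)) (q:ℂ))) *
        ∏ j : Fin m,
          qPochInf ((q:ℂ)^(lam j) * (w j)^2) (q:ℂ) / qPochInf ((w j)^2) (q:ℂ) := by
  have hq : ‖(q : ℂ)‖ < 1 := by rwa [Complex.norm_real, Real.norm_of_nonneg hq0.le]
  set Z : (Σ a : Fin m, Fin (lam a)) → ℂ := fun x => (q : ℂ) ^ (x.2 : ℕ) * w x.1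
  have hblocks := prod_filter_lt_mul_prod_comp_equiv_sigma e
    (fun x y => (1 - q * Z x * Z y) / (1 - Z x * Z y)) (fun x y => by ring)
    (fun x => (1 - Z x ^ 2)⁻¹)
  simp only [hz, ← filter_lt_eq_Ioi]
  rw [hblocks, prod_mul_distrib]
  congr 1
  · refine prod_congr rfl fun a _ => prod_congr rfl fun b hb => ?_
    exact prod_cross_string hq _ _ (hden3 a b (mem_filter.1 hb).2.ne) _ _
  · exact prod_congr rfl fun a _ => prod_self_string hq (w a) (hden5 a) _

/-- String specialization identity (q-Whittaker case): let `λ = (λ_1 ≥ ⋯ ≥ λ_m > 0)` be a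
partition of `k`, `0 < q < 1`, and let `(z_1,...,z_k)` be the concatenation
`(w_1, q w_1, ..., q^{λ_1−1} w_1, ..., w_m, ..., q^{λ_m−1} w_m)` (encoded via a bijection
`e : Fin k ≃ Σ a, Fin (λ a)`).  Then
`∏_{a<b≤k} (1 − q z_a z_b)/(1 − z_a z_b) · ∏_i 1/(1 − z_i²)
 = ∏_{a<b≤m} (q^{λ_a} w_a w_b;q)_∞ (q^{λ_b} w_a w_b;q)_∞ /
     ((w_a w_b;q)_∞ (q^{λ_a+λ_b} w_a w_b;q)_∞) · ∏_j (q^{λ_j} w_j²;q)_∞/(w_j²;q)_∞`. -/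
theorem string_specialization_qWhittaker
    {m k : ℕ} (lam : Fin m → ℕ) (q : ℝ) (hq0 : 0 < q) (hq1 : q < 1)
    (w : Fin m → ℂ)
    (hpos : ∀ a, 0 < lam a)
    (hmono : ∀ a b : Fin m, a ≤ b → lam b ≤ lam a)
    (hk : ∑ a, lam a = k)
    (z : Fin k → ℂ) (e : Fin k ≃ (Σ a : Fin m, Fin (lam a)))
    (hz : ∀ i, z i = (q:ℂ)^(((e i).2 : ℕ)) * w (e i).1)
    (hden1 : ∀ i j : Fin k, i ≠ j → 1 - z i * z j ≠ 0)
    (hden2 : ∀ i, 1 - (z i)^2 ≠ 0)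
    (hden3 : ∀ a b : Fin m, a ≠ b → qPochInf (w a * w b) (q:ℂ) ≠ 0)
    (hden4 : ∀ a b : Fin m, a ≠ b →
      qPochInf ((q:ℂ)^(lam a + lam b) * (w a * w b)) (q:ℂ) ≠ 0)
    (hden5 : ∀ j, qPochInf ((w j)^2) (q:ℂ) ≠ 0) :
    (∏ i : Fin k, ∏ j ∈ Finset.Ioi i, (1 - (q:ℂ) * z i * z j) / (1 - z i * z j)) *
        ∏ i : Fin k, (1 - (z i)^2)⁻¹ =
      (∏ a : Fin m, ∏ b ∈ Finset.Ioi a,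
          (qPochInf ((q:ℂ)^(lam a) * (w a * w b)) (q:ℂ) *
              qPochInf ((q:ℂ)^(lam b) * (w a * w b)) (q:ℂ)) /
            (qPochInf (w a * w b) (q:ℂ) *
              qPochInf ((q:ℂ)^(lam a + lam b) * (w a * w b)) (q:ℂ))) *
        ∏ j : Fin m,
          qPochInf ((q:ℂ)^(lam j) * (w j)^2) (q:ℂ) / qPochInf ((w j)^2) (q:ℂ) :=
  string_specialization_qWhittaker_general lam q hq0 hq1 w z e hz hden3 hden5
end

section
/- Convergence of the q-exponential to the exponential: for every fixed z ∈ ℂ, lim_{q→1⁻} e_q(z) = e^z, where e_q(z) = 1 / ( (z(1−q); q)_∞ ) and (a; q)_∞ = ∏_{i=0}^∞ (1 − a q^i). (For q close enough to 1 the product (z(1−q); q)_∞ is nonzero, so e_q(z) is well defined.) -/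
/-- The q-exponential `e_q(z) = 1/((z(1−q); q)_∞)`. -/
noncomputable def qExp (q : ℝ) (z : ℂ) : ℂ := (qPochInf (z * (1 - (q:ℂ))) (q:ℂ))⁻¹

/-!
Write `w = z(1-q)`. For `|w| ≤ 1/2` no factor `1 - w qⁱ` vanishes, so `(w; q)_∞` is the exponential
of `∑ log (1 - w qⁱ)`. Since `|log (1 - x) + x| ≤ |x|²` for `|x| ≤ 1/2` and `∑ w qⁱ = z`, this sum
differs from `-z` by at most `|w|² / (1 - q) = |z|² (1 - q)`, which tends to `0` as `q → 1⁻`.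
-/

open Filter Topology Complex

lemma norm_log_one_sub_add_le {x : ℂ} (hx : ‖x‖ ≤ 1 / 2) : ‖log (1 - x) + x‖ ≤ ‖x‖ ^ 2 := by
  have h := norm_log_one_add_sub_self_le (z := -x) (by rw [norm_neg]; linarith)
  rw [← sub_eq_add_neg, sub_neg_eq_add, norm_neg] at h
  have hinv : (1 - ‖x‖)⁻¹ ≤ 2 := by
    rw [inv_le_comm₀ (by linarith) two_pos]; linarith
  calc ‖log (1 - x) + x‖ ≤ ‖x‖ ^ 2 * (1 - ‖x‖)⁻¹ / 2 := h
    _ ≤ ‖x‖ ^ 2 * 2 / 2 := by gcongr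
    _ = ‖x‖ ^ 2 := by ring

section PochhammerLog

variable {a q : ℂ}

lemma norm_mul_pow_le_norm (hq : ‖q‖ ≤ 1) (i : ℕ) : ‖a * q ^ i‖ ≤ ‖a‖ := by
  rw [norm_mul, norm_pow]
  exact mul_le_of_le_one_right (norm_nonneg a) (pow_le_one₀ (norm_nonneg q) hq)

lemma one_sub_mul_pow_ne_zero (hq : ‖q‖ ≤ 1) (ha : ‖a‖ < 1) (i : ℕ) : 1 - a * q ^ i ≠ 0 := by
  rw [sub_ne_zero]
  intro h
  have := norm_mul_pow_le_norm (a := a) hq i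
  rw [← h, norm_one] at this
  linarith

lemma summable_log_one_sub_mul_pow (hq : ‖q‖ < 1) :
    Summable fun i : ℕ => log (1 - a * q ^ i) := by
  simpa only [sub_eq_add_neg] using
    summable_log_one_add_of_summable ((summable_geometric_of_norm_lt_one hq).mul_left a).neg

lemma qPochInf_eq_exp_tsum_log (hq : ‖q‖ < 1) (ha : ‖a‖ < 1) :
    qPochInf a q = exp (∑' i : ℕ, log (1 - a * q ^ i)) :=
  (cexp_tsum_eq_tprod (one_sub_mul_pow_ne_zero hq.le ha) (summable_log_one_sub_mul_pow hq)).symm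

lemma norm_tsum_log_one_sub_mul_pow_add_le (hq : ‖q‖ < 1) (ha : ‖a‖ ≤ 1 / 2) :
    ‖∑' i : ℕ, log (1 - a * q ^ i) + a / (1 - q)‖ ≤ ‖a‖ ^ 2 / (1 - ‖q‖) := by
  have hgeom : HasSum (fun i : ℕ => a * q ^ i) (a / (1 - q)) :=
    (hasSum_geometric_of_norm_lt_one hq).mul_left a
  have hbound : ∀ i : ℕ, ‖log (1 - a * q ^ i) + a * q ^ i‖ ≤ ‖a‖ ^ 2 * ‖q‖ ^ i := fun i =>
    calc ‖log (1 - a * q ^ i) + a * q ^ i‖ ≤ ‖a * q ^ i‖ ^ 2 :=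
          norm_log_one_sub_add_le ((norm_mul_pow_le_norm hq.le i).trans ha)
      _ = ‖a‖ ^ 2 * (‖q‖ ^ i) ^ 2 := by rw [norm_mul, norm_pow, mul_pow]
      _ ≤ ‖a‖ ^ 2 * ‖q‖ ^ i := by
          gcongr
          exact pow_le_of_le_one (by positivity) (pow_le_one₀ (norm_nonneg q) hq.le) two_ne_zero
  rw [← ((summable_log_one_sub_mul_pow hq).hasSum.add hgeom).tsum_eq]
  exact tsum_of_norm_bounded
    ((hasSum_geometric_of_lt_one (norm_nonneg q) hq).mul_left (‖a‖ ^ 2)) hbound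

end PochhammerLog

lemma norm_tsum_log_one_sub_mul_pow_add_le_of_mem_Ioo {z : ℂ} {q : ℝ} (hq : q ∈ Set.Ioo 0 1)
    (hz : ‖z * (1 - q)‖ ≤ 1 / 2) :
    ‖∑' i : ℕ, log (1 - z * (1 - q) * (q : ℂ) ^ i) + z‖ ≤ ‖z‖ ^ 2 * (1 - q) := by
  have hq1 : (1 : ℂ) - q ≠ 0 := sub_ne_zero.mpr (by exact_mod_cast hq.2.ne')
  have hnorm_q : ‖(q : ℂ)‖ = q := by simp [abs_of_pos hq.1]
  have hnorm_1q : ‖(1 : ℂ) - q‖ = 1 - q := by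
    rw [← ofReal_one, ← ofReal_sub, norm_real, Real.norm_of_nonneg (by linarith [hq.2])]
  have h := norm_tsum_log_one_sub_mul_pow_add_le (hnorm_q.le.trans_lt hq.2) hz
  rwa [mul_div_cancel_right₀ z hq1, hnorm_q, norm_mul, hnorm_1q, mul_pow, sq (1 - q),
    ← mul_assoc, mul_div_cancel_right₀ _ (by linarith [hq.2])] at h

/-- Convergence of the q-exponential to the exponential: for every fixed `z ∈ ℂ`,
`e_q(z) → e^z` as `q → 1⁻` (through `q ∈ (0,1)`). -/
theorem qExp_tendsto_exp (z : ℂ) :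
    Filter.Tendsto (fun q : ℝ => qExp q z)
      (nhdsWithin 1 (Set.Ioo (0:ℝ) 1)) (nhds (Complex.exp z)) := by
  set S : ℝ → ℂ := fun q => ∑' i : ℕ, log (1 - z * (1 - q) * (q : ℂ) ^ i)
  have hsmall : Tendsto (fun q : ℝ => ‖z * (1 - (q : ℂ))‖) (𝓝 1) (𝓝 0) := by
    have : Continuous fun q : ℝ => ‖z * (1 - (q : ℂ))‖ := by fun_prop
    simpa using this.tendsto 1
  have hgood : ∀ᶠ q : ℝ in 𝓝[Set.Ioo 0 1] 1, q ∈ Set.Ioo 0 1 ∧ ‖z * (1 - (q : ℂ))‖ ≤ 1 / 2 :=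
    eventually_mem_nhdsWithin.and
      (nhdsWithin_le_nhds (hsmall.eventually (eventually_le_nhds one_half_pos)))
  have hbound : Tendsto (fun q : ℝ => ‖z‖ ^ 2 * (1 - q)) (𝓝[Set.Ioo (0 : ℝ) 1] 1) (𝓝 0) := by
    have : Continuous fun q : ℝ => ‖z‖ ^ 2 * (1 - q) := by fun_prop
    simpa using (this.tendsto 1).mono_left nhdsWithin_le_nhds
  have hS : Tendsto S (𝓝[Set.Ioo (0 : ℝ) 1] 1) (𝓝 (-z)) := by
    rw [tendsto_iff_norm_sub_tendsto_zero]
    refine squeeze_zero' (Eventually.of_forall fun _ => norm_nonneg _) ?_ hbound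
    filter_upwards [hgood] with q ⟨hq, hz⟩
    simpa only [sub_neg_eq_add] using norm_tsum_log_one_sub_mul_pow_add_le_of_mem_Ioo hq hz
  refine ((continuous_exp.tendsto z).comp (by simpa using hS.neg)).congr' ?_
  filter_upwards [hgood] with q ⟨hq, hz⟩
  have hq_norm : ‖(q : ℂ)‖ < 1 := by simpa [abs_of_pos hq.1] using hq.2
  rw [Function.comp_apply, qExp, qPochInf_eq_exp_tsum_log hq_norm (hz.trans_lt one_half_lt_one),
    exp_neg]
end
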